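/- Let u, u' ∈ U(2). Then there exist θ, θ' ∈ ℝ such that u' = diag(1, e^{iθ})·u·diag(1, e^{iθ'}) if and only if the (1,1)-entries of u and u' coincide. In particular, the double coset space U(1)\U(2)/U(1), where U(1) is embedded in U(2) as {diag(1, e^{iθ}) : θ ∈ ℝ}, is parametrized by the (1,1)-entry, which lies in the closed unit disc of ℂ. -/

import Mathlib

/-- `diag(1, e^{iθ}) ∈ U(2)`. -/
noncomputable def diagU1 (θ : ℝ) : Matrix (Fin 2) (Fin 2) ℂ :=
  Matrix.diagonal ![1, Complex.exp (θ * Complex.I)]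

/-!
A matrix `u = !![a, b; c, d] ∈ U(2)` is determined by its first row and its determinant,
since `adj u = det u • uᴴ` gives `c = -det u * conj b` and `d = det u * conj a`.
If `u' 0 0 = u 0 0`, then `|b'| = |b|` because both rows have norm one, so some `θ'` turns `b`
into `b'`; multiplying on the left by `diagU1 θ` then only changes the determinant, by `e^{iθ}`,
and `θ` is chosen to make it `det u'`.
-/

open Complex Matrix

theorem Complex.exists_eq_mul_exp_mul_I_of_norm_eq {z w : ℂ} (h : ‖z‖ = ‖w‖) :
    ∃ θ : ℝ, w = z * exp (θ * I) := by
  refine ⟨arg w - arg z, ?_⟩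
  calc w = ‖w‖ * exp (arg w * I) := (norm_mul_exp_arg_mul_I w).symm
    _ = ‖z‖ * exp (arg z * I) * exp ((arg w - arg z : ℝ) * I) := by
      rw [h, mul_assoc, ← exp_add]; push_cast; ring_nf
    _ = z * exp ((arg w - arg z : ℝ) * I) := by rw [norm_mul_exp_arg_mul_I]

namespace Matrix

theorem sum_sq_norm_row_of_mem_unitaryGroup {n 𝕜 : Type*} [Fintype n] [DecidableEq n]
    [RCLike 𝕜] {u : Matrix n n 𝕜} (hu : u ∈ unitaryGroup n 𝕜) (i : n) :
    ∑ j, ‖u i j‖ ^ 2 = 1 := by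
  have := congr_fun₂ (mem_unitaryGroup_iff.mp hu) i i
  simp only [mul_apply, star_apply, RCLike.star_def, RCLike.mul_conj, one_apply_eq] at this
  exact_mod_cast this

variable {n α : Type*} [Fintype n] [DecidableEq n] [CommRing α] [StarRing α]

theorem adjugate_eq_det_smul_star_of_mem_unitaryGroup {u : Matrix n n α}
    (hu : u ∈ unitaryGroup n α) : adjugate u = u.det • star u := by
  calc adjugate u = adjugate u * u * star u := by
        rw [mul_assoc, mem_unitaryGroup_iff.mp hu, mul_one]
    _ = u.det • star u := by rw [adjugate_mul, smul_mul_assoc, one_mul]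

theorem unitaryGroup_fin_two_apply_one_zero {u : Matrix (Fin 2) (Fin 2) α}
    (hu : u ∈ unitaryGroup (Fin 2) α) : u 1 0 = -(u.det * star (u 0 1)) := by
  have := congr_fun₂ (adjugate_eq_det_smul_star_of_mem_unitaryGroup hu) 1 0
  simpa [adjugate_fin_two, neg_eq_iff_eq_neg] using this

theorem unitaryGroup_fin_two_apply_one_one {u : Matrix (Fin 2) (Fin 2) α}
    (hu : u ∈ unitaryGroup (Fin 2) α) : u 1 1 = u.det * star (u 0 0) := by
  have := congr_fun₂ (adjugate_eq_det_smul_star_of_mem_unitaryGroup hu) 0 0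
  simpa [adjugate_fin_two] using this

theorem unitaryGroup_fin_two_ext {u v : Matrix (Fin 2) (Fin 2) α}
    (hu : u ∈ unitaryGroup (Fin 2) α) (hv : v ∈ unitaryGroup (Fin 2) α)
    (h₀₀ : u 0 0 = v 0 0) (h₀₁ : u 0 1 = v 0 1) (hdet : u.det = v.det) : u = v := by
  ext i j
  fin_cases i <;> fin_cases j
  · exact h₀₀
  · exact h₀₁
  · simp [unitaryGroup_fin_two_apply_one_zero hu, unitaryGroup_fin_two_apply_one_zero hv, h₀₁,
      hdet]
  · simp [unitaryGroup_fin_two_apply_one_one hu, unitaryGroup_fin_two_apply_one_one hv, h₀₀,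
      hdet]

end Matrix

theorem diagU1_mem_unitaryGroup (θ : ℝ) : diagU1 θ ∈ unitaryGroup (Fin 2) ℂ := by
  rw [mem_unitaryGroup_iff, diagU1, star_eq_conjTranspose, diagonal_conjTranspose,
    diagonal_mul_diagonal, ← diagonal_one]
  congr 1
  ext i
  fin_cases i <;> simp [mul_conj, normSq_eq_norm_sq]

theorem det_diagU1_mul_mul_diagU1 (u : Matrix (Fin 2) (Fin 2) ℂ) (θ θ' : ℝ) :
    (diagU1 θ * u * diagU1 θ').det = u.det * exp (θ' * I) * exp (θ * I) := by
  simp only [det_mul, diagU1, det_diagonal, Fin.prod_univ_two, cons_val_zero, cons_val_one,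
    one_mul]
  ring

theorem diagU1_mul_mul_diagU1_apply_zero_zero (u : Matrix (Fin 2) (Fin 2) ℂ) (θ θ' : ℝ) :
    (diagU1 θ * u * diagU1 θ') 0 0 = u 0 0 := by
  simp [diagU1]

theorem diagU1_mul_mul_diagU1_apply_zero_one (u : Matrix (Fin 2) (Fin 2) ℂ) (θ θ' : ℝ) :
    (diagU1 θ * u * diagU1 θ') 0 1 = u 0 1 * exp (θ' * I) := by
  simp [diagU1]

theorem double_cosets_U1_U2_U1 (u u' : Matrix (Fin 2) (Fin 2) ℂ)
    (hu : u ∈ Matrix.unitaryGroup (Fin 2) ℂ) (hu' : u' ∈ Matrix.unitaryGroup (Fin 2) ℂ) :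
    ((∃ θ θ' : ℝ, u' = diagU1 θ * u * diagU1 θ') ↔ u' 0 0 = u 0 0) ∧
      ‖u 0 0‖ ≤ 1 := by
  refine ⟨⟨?_, fun h₀₀ => ?_⟩, entry_norm_bound_of_unitary hu 0 0⟩
  · rintro ⟨θ, θ', rfl⟩
    exact diagU1_mul_mul_diagU1_apply_zero_zero u θ θ'
  have h₀₁ : ‖u 0 1‖ = ‖u' 0 1‖ := by
    have h := sum_sq_norm_row_of_mem_unitaryGroup hu 0
    have h' := sum_sq_norm_row_of_mem_unitaryGroup hu' 0
    rw [Fin.sum_univ_two] at h h'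
    rw [h₀₀] at h'
    exact (sq_eq_sq₀ (norm_nonneg _) (norm_nonneg _)).mp (by linarith)
  obtain ⟨θ', hθ'⟩ := exists_eq_mul_exp_mul_I_of_norm_eq h₀₁
  have hdet : ‖u.det * exp (θ' * I)‖ = ‖u'.det‖ := by
    have h1 : ‖u.det‖ = 1 := CStarRing.norm_of_mem_unitary (det_of_mem_unitary hu)
    have h2 : ‖u'.det‖ = 1 := CStarRing.norm_of_mem_unitary (det_of_mem_unitary hu')
    rw [norm_mul, norm_exp_ofReal_mul_I, h1, h2, mul_one]
  obtain ⟨θ, hθ⟩ := exists_eq_mul_exp_mul_I_of_norm_eq hdet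
  refine ⟨θ, θ', unitaryGroup_fin_two_ext hu'
    (Submonoid.mul_mem _ (Submonoid.mul_mem _ (diagU1_mem_unitaryGroup θ) hu)
      (diagU1_mem_unitaryGroup θ')) ?_ ?_ ?_⟩
  · rw [diagU1_mul_mul_diagU1_apply_zero_zero, h₀₀]
  · rw [diagU1_mul_mul_diagU1_apply_zero_one, hθ']
  · rw [det_diagU1_mul_mul_diagU1, hθ]
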